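/- For the Levi-Civita connection ∇ on the θ-deformed sphere O(S^{2n}_θ) (given on generators by ∇_{T_J} T_K = −T_J · u_K), the Ricci tensor equals (2n−1) times the round metric, 𝖱(T_J, T_K) = (2n−1) T_J(u_K) = (2n−1) g(T_J, T_K), and the scalar curvature is the constant 𝗋 = 2n(2n−1); in particular S^{2n}_θ is an Einstein space. Here 𝖱(T_J,T_K) := Σ_I θ_{I'}(𝖱(T_I,T_J)T_K) with Riemannian curvature 𝖱(T_I,T_J)T_K = T_I · T_J(u_K) − λ_{IJ} T_J · T_I(u_K), and 𝗋 = Σ_J 𝖱(g^{-1}(θ_{J'}), T_J). -/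
import Mathlib


/-!
STATEMENT 19: for the Levi-Civita connection `∇` on the θ-deformed sphere
`O(S^{2n}_θ)` (given on generators by `∇_{T_J} T_K = −T_J · u_K`), the Ricci
tensor equals `(2n−1)` times the round metric,
`𝖱(T_J, T_K) = (2n−1) T_J(u_K) = (2n−1) g(T_J, T_K)`, and the scalar curvature
is the constant `𝗋 = 2n(2n−1)`; in particular `S^{2n}_θ` is an Einstein space.

Here `𝖱(T_J,T_K) := Σ_I θ_{I'}(𝖱(T_I,T_J)T_K)` with Riemannian curvature
`𝖱(T_I,T_J)T_K = T_I · T_J(u_K) − λ_{IJ} T_J · T_I(u_K)` (right module action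
`X · b`), the dual one-forms satisfy `θ_J(T_K) = T_J(u_K) = g(T_J,T_K)` and are
right `O(S^{2n}_θ)`-linear, `θ_J(X·b) = θ_J(X)·b`, so that
`θ_{I'}(𝖱(T_I,T_J)T_K) = T_{I'}(u_I) ∙ T_J(u_K) − λ_{IJ} T_{I'}(u_J) ∙ T_I(u_K)`;
and `𝗋 = Σ_J 𝖱(g⁻¹(θ_{J'}), T_J) = Σ_J 𝖱(T_{J'}, T_J)`.
-/

noncomputable section

open scoped BigOperators

namespace Statement19

/-- `λ_{IJ} = exp(−2πi θ_{IJ})`. -/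
def lam {I : Type*} (θm : I → I → ℝ) (i j : I) : ℂ :=
  Complex.exp (-(2 * (Real.pi : ℂ) * Complex.I) * (θm i j : ℂ))

/-- index set `{1, …, 2n+1}` -/
abbrev Idx (n : ℕ) := Fin (2 * n + 1)

/-- the weight lattice of the `n`-torus action -/
abbrev W (n : ℕ) := Idx n → ℤ

/-- the weight of the generator `u_I`: `e_I − e_{I'}`. -/
def wt {n : ℕ} (inv : Idx n → Idx n) (i : Idx n) : W n :=
  fun j => (if j = i then 1 else 0) - (if j = inv i then 1 else 0)

/-- the deformation parameters extended biadditively to the weight lattice -/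
def pairing {n : ℕ} (θm : Idx n → Idx n → ℝ) (p q : W n) : ℝ :=
  ∑ i, ∑ j, (p i : ℝ) * (q j : ℝ) * θm i j

/-- the braiding factor between homogeneous elements of weights `p` and `q`;
on generators `fac (wt inv I) (wt inv J) = λ_{IJ}`. -/
def fac {n : ℕ} (θm : Idx n → Idx n → ℝ) (p q : W n) : ℂ :=
  Complex.exp (-((Real.pi : ℂ) * Complex.I) * ((pairing θm p q : ℝ) : ℂ) / 2)

theorem sphere_is_einstein
    {n : ℕ}
    (A : Type*) [Ring A] [Algebra ℂ A]
    -- the involution `I ↦ I'` with fixed point `z0` ("the index 0")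
    (inv : Idx n → Idx n) (z0 : Idx n)
    (hinv : ∀ I, inv (inv I) = I) (hz0 : inv z0 = z0)
    -- deformation parameters
    (θm : Idx n → Idx n → ℝ)
    (hθ₁ : ∀ I J, θm I J = - θm J I)
    (hθ₂ : ∀ I J, θm I (inv J) = - θm I J)
    -- torus-weight grading of `A`
    (𝒜 : W n → Submodule ℂ A) [GradedAlgebra 𝒜]
    -- generators of the sphere
    (u : Idx n → A)
    (hu : ∀ I, u I ∈ 𝒜 (wt inv I))
    (hgen : Algebra.adjoin ℂ (Set.range u) = ⊤)
    (hcomm : ∀ I J, u I * u J = lam θm I J • (u J * u I))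
    (hsph : ∑ I, u (inv I) * u I = 1)
    -- the braided derivations `T_J`
    (T : Idx n → Module.End ℂ A)
    (hTval : ∀ J K, T J (u K) = (if K = inv J then 1 else 0) - u J * u K)
    (hTLeib : ∀ J (m : W n) (x y : A), x ∈ 𝒜 m →
      T J (x * y) = T J x * y + fac θm (wt inv J) m • (x * T J y))
    (hTsum : (∑ J, (LinearMap.mulLeft ℂ (u (inv J))) ∘ₗ T J) = 0)
    -- the Ricci tensor `𝖱(T_J,T_K) = Σ_I θ_{I'}(𝖱(T_I,T_J)T_K)`, with
    -- `𝖱(T_I,T_J)T_K = T_I · T_J(u_K) − λ_{IJ} T_J · T_I(u_K)` and the dual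
    -- one-forms `θ_{I'}` evaluated using their right `O(S^{2n}_θ)`-linearity
    (Ric : Idx n → Idx n → A)
    (hRic : ∀ J K, Ric J K
      = ∑ I, ((T (inv I) (u I)) * (T J (u K))
          - lam θm I J • ((T (inv I) (u J)) * (T I (u K))))) :
    -- the Ricci tensor is `(2n−1)` times the round metric `g(T_J,T_K) = T_J(u_K)`
    (∀ J K, Ric J K = ((2 * (n : ℂ) - 1)) • T J (u K)) ∧
    -- the scalar curvature `𝗋 = Σ_J 𝖱(g⁻¹(θ_{J'}), T_J) = Σ_J 𝖱(T_{J'}, T_J)`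
    -- is the constant `2n(2n−1)`
    ((∑ J, Ric (inv J) J) = ((2 * (n : ℂ)) * (2 * (n : ℂ) - 1)) • (1 : A)) := by
  -- basic facts about lam
  have hlam_mul : ∀ I J, lam θm I J * lam θm J I = 1 := by
    intro I J
    rw [lam, lam, ← Complex.exp_add, ← Complex.exp_zero]
    congr 1
    rw [hθ₁ I J]
    push_cast
    ring
  have hlam_inv : ∀ K J, lam θm (inv K) J = lam θm J K := by
    intro K J
    have h : θm (inv K) J = θm J K := by
      have h1 := hθ₁ (inv K) J; have h2 := hθ₂ J K; linarith
    rw [lam, lam, h]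
  have hlam_self : ∀ I, lam θm I I = 1 := by
    intro I
    have h : θm I I = 0 := by have := hθ₁ I I; linarith
    rw [lam, h]
    simp
  -- key braided commutation
  have key : ∀ (I J : Idx n) (a b : A),
      lam θm I J • (a * u J * (u I * b)) = a * u I * (u J * b) := by
    intro I J a b
    rw [show a * u J * (u I * b) = a * (u J * u I * b) by rw [mul_assoc, mul_assoc],
      hcomm J I, smul_mul_assoc, mul_smul_comm, smul_smul, hlam_mul, one_smul,
      mul_assoc, mul_assoc]
  have huu : ∀ K J, lam θm (inv K) J • (u K * u J) = u J * u K := by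
    intro K J
    rw [hcomm K J, smul_smul, hlam_inv, hlam_mul, one_smul]
  -- the sum of T_{I'}(u_I)
  have hS1 : (∑ I, T (inv I) (u I)) = (2 * (n : ℂ)) • (1 : A) := by
    have h : ∀ I : Idx n, T (inv I) (u I) = 1 - u (inv I) * u I := by
      intro I; rw [hTval, hinv]; simp
    simp_rw [h]
    rw [Finset.sum_sub_distrib, hsph, Finset.sum_const, Finset.card_univ,
      Fintype.card_fin]
    rw [← Nat.cast_smul_eq_nsmul ℂ, show ((2 * n + 1 : ℕ) : ℂ) = 2 * (n : ℂ) + 1 by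
      push_cast; ring]
    rw [add_smul, one_smul, add_sub_cancel_right]
  -- the per-index identity for the second sum
  have main : ∀ I J K : Idx n, lam θm I J • (T (inv I) (u J) * T I (u K))
      = (if I = J then ((if K = inv J then (1:A) else 0) - u J * u K) else 0)
        - (if I = inv K then u J * u K else 0)
        + u (inv I) * u I * (u J * u K) := by
    intro I J K
    rw [hTval, hTval, hinv]
    by_cases hIJ : I = J <;> by_cases hIK : I = inv K
    · -- I = J, I = inv K
      have hKI : K = inv I := by rw [hIK, hinv]
      subst hIJ
      simp only [if_pos (rfl : I = I), if_pos hKI, if_pos hIK]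
      have hcmm : u (inv I) * u I = u I * u (inv I) := by
        rw [hcomm (inv I) I, hlam_inv, hlam_self, one_smul]
      rw [hlam_self, one_smul, hKI, ← hcmm]
      noncomm_ring
      rw [one_mul]
      abel
    · -- I = J, I ≠ inv K
      have hKI : ¬ K = inv I := fun h => hIK (by rw [h, hinv])
      subst hIJ
      simp only [if_pos (rfl : I = I), if_neg hKI, if_neg hIK]
      rw [hlam_self, one_smul]
      noncomm_ring
      rw [one_mul]
      abel
    · -- I ≠ J, I = inv K
      have hKI : K = inv I := by rw [hIK, hinv]
      have hJI : ¬ J = I := fun h => hIJ h.symm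
      rw [if_neg hJI, if_pos hKI, if_neg hIJ, if_pos hIK]
      subst hIK
      rw [hinv]
      have expand : ((0:A) - u K * u J) * (1 - u (inv K) * u K)
          = u K * u J * (u (inv K) * u K) - u K * u J := by noncomm_ring
      rw [expand, smul_sub, key (inv K) J (u K) (u K), huu]
      abel
    · -- I ≠ J, I ≠ inv K
      have hKI : ¬ K = inv I := fun h => hIK (by rw [h, hinv])
      have hJI : ¬ J = I := fun h => hIJ h.symm
      rw [if_neg hJI, if_neg hKI, if_neg hIJ, if_neg hIK]
      have h4 := key I J (u (inv I)) (u K)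
      rw [zero_sub, zero_sub, neg_mul, mul_neg, neg_neg, h4]
      abel
  -- the Ricci tensor identity
  have hRicci : ∀ J K, Ric J K = (2 * (n : ℂ) - 1) • T J (u K) := by
    intro J K
    rw [hRic, Finset.sum_sub_distrib, ← Finset.sum_mul, hS1]
    simp_rw [main]
    rw [Finset.sum_add_distrib, Finset.sum_sub_distrib, ← Finset.sum_mul, hsph, one_mul,
      Finset.sum_ite_eq' Finset.univ J, Finset.sum_ite_eq' Finset.univ (inv K),
      if_pos (Finset.mem_univ _), if_pos (Finset.mem_univ _)]
    rw [← hTval J K]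
    rw [smul_mul_assoc, one_mul, sub_smul, one_smul]
    abel
  refine ⟨hRicci, ?_⟩
  simp_rw [hRicci]
  rw [← Finset.smul_sum, hS1, smul_smul, mul_comm]

end Statement19
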